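/- arXiv:1706.03109 — 2 statements merged into one kernel-verified Lean document; each statement's English description precedes it below -/
import Mathlib

section
/- For every n ≥ 4, the pseudoachromatic number of the cycle C_n equals max{k : k·⌊k/2⌋ ≤ n}. -/
open SimpleGraph

/-- A graph is planar if it has a drawing in the plane: vertices map injectively to points,
edges map to arcs between their endpoints, arc interiors avoid vertex images, and the
interiors of arcs of distinct edges are disjoint. -/
def SimpleGraph.IsPlanar {V : Type*} (G : SimpleGraph V) : Prop :=
  ∃ f : V → ℝ × ℝ, Function.Injective f ∧
    ∃ γ : ∀ ⦃u v : V⦄, G.Adj u v → _root_.Path (f u) (f v),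
      (∀ ⦃u v : V⦄ (h : G.Adj u v), Function.Injective (γ h)) ∧
      (∀ ⦃u v : V⦄ (h : G.Adj u v) (t : unitInterval), t ≠ 0 → t ≠ 1 → ∀ w, γ h t ≠ f w) ∧
      (∀ ⦃u v u' v' : V⦄ (h : G.Adj u v) (h' : G.Adj u' v'), s(u, v) ≠ s(u', v') →
        ∀ s t : unitInterval, s ≠ 0 → s ≠ 1 → γ h s ≠ γ h' t)

/-- The cone over `G`: a new vertex `none` joined to every vertex of `G`. -/
def SimpleGraph.cone {V : Type*} (G : SimpleGraph V) : SimpleGraph (Option V) :=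
  SimpleGraph.fromRel
    (fun x y => (∃ u v, x = some u ∧ y = some v ∧ G.Adj u v) ∨ x = none)

/-- A graph is outerplanar iff the cone over it is planar. -/
def SimpleGraph.IsOuterplanar {V : Type*} (G : SimpleGraph V) : Prop :=
  G.cone.IsPlanar

/-- A complete `k`-coloring: surjective, and every pair of distinct colors appears on an edge. -/
def SimpleGraph.IsCompleteColoring {V : Type*} {k : ℕ} (G : SimpleGraph V)
    (c : V → Fin k) : Prop :=
  Function.Surjective c ∧
    ∀ i j : Fin k, i ≠ j → ∃ u v, G.Adj u v ∧ c u = i ∧ c v = j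

/-- A proper coloring: adjacent vertices receive distinct colors. -/
def SimpleGraph.IsProperColoring {V : Type*} {k : ℕ} (G : SimpleGraph V)
    (c : V → Fin k) : Prop :=
  ∀ ⦃u v : V⦄, G.Adj u v → c u ≠ c v

/-- The pseudoachromatic number: the largest `k` admitting a complete `k`-coloring. -/
noncomputable def SimpleGraph.pseudoachromatic {V : Type*} (G : SimpleGraph V) : ℕ :=
  sSup {k | ∃ c : V → Fin k, G.IsCompleteColoring c}

/-- The achromatic number: the largest `k` admitting a proper complete `k`-coloring. -/
noncomputable def SimpleGraph.achromatic {V : Type*} (G : SimpleGraph V) : ℕ :=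
  sSup {k | ∃ c : V → Fin k, G.IsProperColoring c ∧ G.IsCompleteColoring c}

/-- The chromatic number: the least `k` admitting a proper `k`-coloring. -/
noncomputable def SimpleGraph.chromNum {V : Type*} (G : SimpleGraph V) : ℕ :=
  sInf {k | ∃ c : V → Fin k, G.IsProperColoring c}

/-- The thickness: the least number of planar subgraphs whose union is `G`. -/
noncomputable def SimpleGraph.thickness {V : Type*} (G : SimpleGraph V) : ℕ :=
  sInf {k | ∃ f : Fin k → SimpleGraph V, (∀ i, (f i).IsPlanar) ∧ (⨆ i, f i) = G}

/-- The outerthickness: the least number of outerplanar subgraphs whose union is `G`. -/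
noncomputable def SimpleGraph.outerthickness {V : Type*} (G : SimpleGraph V) : ℕ :=
  sInf {k | ∃ f : Fin k → SimpleGraph V, (∀ i, (f i).IsOuterplanar) ∧ (⨆ i, f i) = G}

/-- The 4-girth-thickness: the least number of planar subgraphs of girth at least 4
whose union is `G`. -/
noncomputable def SimpleGraph.girth4Thickness {V : Type*} (G : SimpleGraph V) : ℕ :=
  sInf {k | ∃ f : Fin k → SimpleGraph V,
    (∀ i, (f i).IsPlanar ∧ 4 ≤ (f i).egirth) ∧ (⨆ i, f i) = G}

/-!
Every vertex of `C_n` has two neighbours, so a colour class with `m` vertices meets at most `2m`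
other colours; in a complete `k`-colouring every class therefore has at least `⌊k/2⌋` vertices,
whence `k⌊k/2⌋ ≤ n`. Conversely, reading the colours around the cycle, a complete colouring is a
cyclic word in which any two letters are adjacent, i.e. a closed walk covering every edge of `K_k`.
For `k ≥ 2` such a word of length exactly `k⌊k/2⌋` is built by induction from `k` to `k + 2`: at the
letter `0` splice in a detour that zigzags through the old letters, alternating between the two new
ones. Longer cycles are coloured by repeating the letter `0`.
-/

open Finset

namespace SimpleGraph.IsCompleteColoring

variable {V : Type*} [Fintype V] {G : SimpleGraph V} [DecidableRel G.Adj] {k : ℕ} {c : V → Fin k}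

theorem card_sub_one_le_mul_card_fiber {d : ℕ} (hc : G.IsCompleteColoring c)
    (hdeg : ∀ v, G.degree v ≤ d) (i : Fin k) : k - 1 ≤ d * #{v | c v = i} := by
  classical
  set S : Finset V := {v | c v = i}
  have hcover : univ.erase i ⊆ (S.biUnion fun v => G.neighborFinset v).image c := by
    intro j hj
    obtain ⟨u, v, huv, hu, hv⟩ := hc.2 i j (ne_of_mem_erase hj).symm
    exact mem_image.mpr ⟨v, mem_biUnion.mpr ⟨u, by simp [S, hu], by simpa using huv⟩, hv⟩
  calc k - 1 = #(univ.erase i) := by simp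
    _ ≤ #((S.biUnion fun v => G.neighborFinset v).image c) := card_le_card hcover
    _ ≤ #(S.biUnion fun v => G.neighborFinset v) := card_image_le
    _ ≤ ∑ v ∈ S, G.degree v := card_biUnion_le
    _ ≤ ∑ _v ∈ S, d := sum_le_sum fun v _ => hdeg v
    _ = d * #S := by rw [sum_const, smul_eq_mul, mul_comm]

theorem mul_div_two_le_card (hc : G.IsCompleteColoring c) (hdeg : ∀ v, G.degree v ≤ 2) :
    k * (k / 2) ≤ Fintype.card V :=
  calc k * (k / 2) = ∑ _i : Fin k, k / 2 := by simp
    _ ≤ ∑ i, #{v | c v = i} := sum_le_sum fun i _ => by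
      have := hc.card_sub_one_le_mul_card_fiber hdeg i
      omega
    _ = Fintype.card V := (card_eq_sum_card_fiberwise fun v _ => mem_univ (c v)).symm

end SimpleGraph.IsCompleteColoring

theorem SimpleGraph.cycleGraph_degree_le_two {n : ℕ} (v : Fin n) :
    (cycleGraph n).degree v ≤ 2 :=
  match n, v with
  | 1, _ => by simp [cycleGraph_one_eq_bot]
  | _ + 2, _ => cycleGraph_degree_two_le ▸ card_le_two

/-- `w` is read cyclically from the letter `0`, so its cyclically adjacent pairs are the consecutive
pairs of `w ++ [0]`. -/
structure IsCompleteCyclicWord (k : ℕ) (w : List ℕ) : Prop where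
  head?_eq : w.head? = some 0
  lt_of_mem : ∀ x ∈ w, x < k
  adjacent : ∀ a < k, ∀ b < k, a ≠ b → [a, b] <:+: w ++ [0] ∨ [b, a] <:+: w ++ [0]

theorem IsCompleteCyclicWord.pos {k : ℕ} {w : List ℕ} (hw : IsCompleteCyclicWord k w) : 0 < k :=
  hw.lt_of_mem 0 (List.mem_of_mem_head? hw.head?_eq)

theorem isCompleteCyclicWord_two : IsCompleteCyclicWord 2 [0, 1] :=
  ⟨rfl, by decide, by decide⟩

theorem isCompleteCyclicWord_three : IsCompleteCyclicWord 3 [0, 1, 2] :=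
  ⟨rfl, by decide, by decide⟩

def zigzagPartner (k j : ℕ) : ℕ := if j % 2 = 0 then k + 1 else k

def zigzag (k : ℕ) : ℕ → ℕ → List ℕ
  | _, 0 => []
  | j, t + 1 => j :: zigzagPartner k j :: zigzag k (j + 1) t

theorem length_zigzag (k j t : ℕ) : (zigzag k j t).length = 2 * t := by
  induction t generalizing j with
  | zero => rfl
  | succ t ih => simp only [zigzag, List.length_cons, ih]; ring

theorem zigzag_succ_right (k j t : ℕ) :
    zigzag k j (t + 1) = zigzag k j t ++ [j + t, zigzagPartner k (j + t)] := by
  induction t generalizing j with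
  | zero => simp [zigzag]
  | succ t ih => rw [zigzag, ih, zigzag, ← add_assoc, add_right_comm]; rfl

theorem lt_of_mem_zigzag {k j t x : ℕ} (hx : x ∈ zigzag k j t) (hjt : j + t ≤ k) :
    x < k + 2 := by
  induction t generalizing j with
  | zero => simp [zigzag] at hx
  | succ t ih =>
    simp only [zigzag, List.mem_cons] at hx
    rcases hx with rfl | rfl | hx
    · omega
    · unfold zigzagPartner; split <;> omega
    · exact ih hx (by omega)

theorem infix_zigzag {k j t i : ℕ} (hji : j ≤ i) (hit : i < j + t) :
    [i, zigzagPartner k i] <:+: zigzag k j t := by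
  induction t generalizing j with
  | zero => omega
  | succ t ih =>
    rcases hji.eq_or_lt with rfl | hji
    · exact List.infix_append_left
    · exact List.infix_cons (List.infix_cons (ih hji (by omega)))

theorem infix_zigzag_succ {k j t i : ℕ} (hji : j ≤ i) (hit : i + 1 < j + t) :
    [zigzagPartner k i, i + 1] <:+: zigzag k j t := by
  induction t generalizing j with
  | zero => omega
  | succ t ih =>
    rcases hji.eq_or_lt with rfl | hji
    · obtain ⟨t, rfl⟩ : ∃ t', t = t' + 1 := ⟨t - 1, by omega⟩
      exact List.infix_cons List.infix_append_left
    · exact List.infix_cons (List.infix_cons (ih hji (by omega)))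

/-- A closed walk from `0` joining each of the new letters `k`, `k + 1` to every letter
`0, …, k - 1` and to each other. -/
def detour (k : ℕ) : List ℕ := zigzag k 0 k ++ if k % 2 = 0 then [k + 1, k] else [k]

theorem length_detour_add (k : ℕ) :
    (detour k).length + k * (k / 2) = (k + 2) * ((k + 2) / 2) := by
  rcases Nat.even_or_odd' k with ⟨m, rfl | rfl⟩
  · have h1 : 2 * m / 2 = m := by omega
    have h2 : (2 * m + 2) / 2 = m + 1 := by omega
    simp [detour, length_zigzag, h1, h2]
    ring
  · have h1 : (2 * m + 1) / 2 = m := by omega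
    have h2 : (2 * m + 1 + 2) / 2 = m + 1 := by omega
    simp [detour, length_zigzag, h1, h2, Nat.add_mod]
    ring

theorem head?_detour {k : ℕ} (hk : 0 < k) : (detour k).head? = some 0 := by
  obtain ⟨k, rfl⟩ : ∃ k', k = k' + 1 := ⟨k - 1, by omega⟩
  rfl

theorem lt_of_mem_detour {k x : ℕ} (hx : x ∈ detour k) : x < k + 2 := by
  rcases List.mem_append.mp hx with hx | hx
  · exact lt_of_mem_zigzag hx (zero_add k).le
  · split at hx <;> simp at hx <;> omega

theorem infix_detour_succ_self (k : ℕ) : [k + 1, k] <:+: detour k := by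
  unfold detour
  rcases Nat.even_or_odd' k with ⟨m, rfl | rfl⟩
  · rw [if_pos (by omega)]
    exact List.infix_append_right
  · have hp : zigzagPartner (2 * m + 1) (0 + 2 * m) = 2 * m + 1 + 1 := by
      simp [zigzagPartner]
    rw [if_neg (by omega), zigzag_succ_right, hp]
    exact ⟨zigzag (2 * m + 1) 0 (2 * m) ++ [0 + 2 * m], [], by simp⟩

theorem infix_detour_append_of_lt {k j : ℕ} (hj : j < k) :
    ([j, k] <:+: detour k ++ [0] ∨ [k, j] <:+: detour k ++ [0]) ∧
      ([j, k + 1] <:+: detour k ++ [0] ∨ [k + 1, j] <:+: detour k ++ [0]) := by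
  have hzigzag {l : List ℕ} (h : l <:+: zigzag k 0 k) : l <:+: detour k ++ [0] :=
    List.infix_append_of_infix_left (List.infix_append_of_infix_left h)
  rcases Nat.eq_zero_or_pos j with rfl | hj0
  · refine ⟨Or.inr ?_, Or.inl ?_⟩
    · unfold detour
      split
      · exact ⟨zigzag k 0 k ++ [k + 1], [], by simp⟩
      · exact ⟨zigzag k 0 k, [], by simp⟩
    · simpa [zigzagPartner] using hzigzag (infix_zigzag le_rfl (by omega))
  obtain ⟨i, rfl⟩ : ∃ i, j = i + 1 := ⟨j - 1, by omega⟩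
  have h1 := hzigzag (infix_zigzag (k := k) (Nat.zero_le (i + 1)) (by omega))
  have h2 := hzigzag (infix_zigzag_succ (k := k) (Nat.zero_le i) (by omega))
  unfold zigzagPartner at h1 h2
  rcases Nat.mod_two_eq_zero_or_one i with hi | hi
  · rw [if_neg (by omega)] at h1
    rw [if_pos hi] at h2
    exact ⟨Or.inl h1, Or.inr h2⟩
  · rw [if_pos (by omega)] at h1
    rw [if_neg (by omega)] at h2
    exact ⟨Or.inr h2, Or.inl h1⟩

theorem IsCompleteCyclicWord.detour_append {k : ℕ} {w : List ℕ}
    (hw : IsCompleteCyclicWord k w) :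
    IsCompleteCyclicWord (k + 2) (detour k ++ w) := by
  obtain ⟨t, ht⟩ := List.head?_eq_some_iff.mp hw.head?_eq
  have hold {l : List ℕ} (h : l <:+: w ++ [0]) : l <:+: detour k ++ w ++ [0] :=
    h.trans ⟨detour k, [], by simp⟩
  have hnew {l : List ℕ} (h : l <:+: detour k ++ [0]) : l <:+: detour k ++ w ++ [0] :=
    h.trans ⟨[], t ++ [0], by simp [ht]⟩
  have hlt : ∀ a < k + 2, ∀ b < a,
      [a, b] <:+: detour k ++ w ++ [0] ∨ [b, a] <:+: detour k ++ w ++ [0] := by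
    intro a ha b hba
    rcases (by omega : a < k ∨ a = k ∨ a = k + 1) with ha | rfl | rfl
    · exact (hw.adjacent a ha b (by omega) (by omega)).imp hold hold
    · exact (infix_detour_append_of_lt hba).1.symm.imp hnew hnew
    · rcases (by omega : b < k ∨ b = k) with hb | rfl
      · exact (infix_detour_append_of_lt hb).2.symm.imp hnew hnew
      · exact Or.inl (hnew ((infix_detour_succ_self b).trans List.infix_append_left))
  refine ⟨by simp [head?_detour hw.pos], fun x hx => ?_, fun a ha b hb hab => ?_⟩
  · rcases List.mem_append.mp hx with hx | hx
    · exact lt_of_mem_detour hx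
    · exact (hw.lt_of_mem x hx).trans (by omega)
  · rcases hab.lt_or_gt with h | h
    · exact (hlt b hb a h).symm
    · exact hlt a ha b h

theorem exists_isCompleteCyclicWord : ∀ k, 2 ≤ k →
    ∃ w : List ℕ, IsCompleteCyclicWord k w ∧ w.length = k * (k / 2)
  | 2, _ => ⟨[0, 1], isCompleteCyclicWord_two, rfl⟩
  | 3, _ => ⟨[0, 1, 2], isCompleteCyclicWord_three, rfl⟩
  | k + 4, _ => by
    obtain ⟨w, hw, hlen⟩ := exists_isCompleteCyclicWord (k + 2) (by omega)
    refine ⟨detour (k + 2) ++ w, hw.detour_append, ?_⟩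
    rw [List.length_append, hlen, length_detour_add]

theorem List.exists_getD_eq_of_infix {α : Type*} {a b d : α} {l : List α} (h : [a, b] <:+: l) :
    ∃ i, i + 1 < l.length ∧ l.getD i d = a ∧ l.getD (i + 1) d = b := by
  obtain ⟨i, hi, hab⟩ := List.infix_iff_getElem?.mp h
  refine ⟨i, by simp only [List.length_cons, List.length_nil] at hi; omega, ?_, ?_⟩
  · simp [List.getD_eq_getElem?_getD, by simpa using hab 0 (by simp)]
  · simp [List.getD_eq_getElem?_getD, by simpa [add_comm] using hab 1 (by simp)]

namespace IsCompleteCyclicWord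

variable {k : ℕ} {w : List ℕ}

theorem getD_append_zero_lt (hw : IsCompleteCyclicWord k w) (i : ℕ) :
    (w ++ [0]).getD i 0 < k := by
  rw [List.getD_eq_getElem?_getD]
  cases h : (w ++ [0])[i]? with
  | none => exact hw.pos
  | some x =>
    rcases List.mem_append.mp (List.mem_of_getElem? h) with hx | hx
    · exact hw.lt_of_mem x hx
    · exact List.mem_singleton.mp hx ▸ hw.pos

theorem getD_append_zero_mod (hw : IsCompleteCyclicWord k w) {n i : ℕ} (hlen : w.length ≤ n)
    (hi : i ≤ n) : (w ++ [0]).getD (i % n) 0 = (w ++ [0]).getD i 0 := by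
  obtain ⟨t, rfl⟩ := List.head?_eq_some_iff.mp hw.head?_eq
  rcases hi.lt_or_eq with hi | rfl
  · rw [Nat.mod_eq_of_lt hi]
  · rw [Nat.mod_self, List.getD_append_right _ _ _ _ hlen]
    simp [List.getD_eq_getElem?_getD]

theorem exists_isCompleteColoring_cycleGraph (hw : IsCompleteCyclicWord k w) {n : ℕ}
    (hn : 2 ≤ n) (hlen : w.length ≤ n) :
    ∃ c : Fin n → Fin k, (cycleGraph n).IsCompleteColoring c := by
  obtain ⟨m, rfl⟩ : ∃ m, n = m + 2 := ⟨n - 2, by omega⟩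
  -- vertices past the end of `w` get the default letter `0`, repeating the closing letter
  let c : Fin (m + 2) → Fin k := fun u => ⟨(w ++ [0]).getD u 0, hw.getD_append_zero_lt u⟩
  have hadj : ∀ a b : Fin k, [a.val, b.val] <:+: w ++ [0] →
      ∃ u v, (cycleGraph (m + 2)).Adj u v ∧ c u = a ∧ c v = b := by
    intro a b hab
    obtain ⟨i, hi, ha, hb⟩ := List.exists_getD_eq_of_infix (d := 0) hab
    simp only [List.length_append, List.length_cons, List.length_nil] at hi
    refine ⟨⟨i, by omega⟩, ⟨i, by omega⟩ + 1,
      cycleGraph_adj.mpr (Or.inr (add_sub_cancel_left _ _)), Fin.ext ha, Fin.ext ?_⟩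
    simp only [c, Fin.val_add, Fin.val_one]
    rw [hw.getD_append_zero_mod hlen (by omega), hb]
  have hcomplete : ∀ a b : Fin k, a ≠ b →
      ∃ u v, (cycleGraph (m + 2)).Adj u v ∧ c u = a ∧ c v = b := by
    intro a b hab
    rcases hw.adjacent a a.isLt b b.isLt (Fin.val_ne_of_ne hab) with h | h
    · exact hadj a b h
    · obtain ⟨u, v, huv, hu, hv⟩ := hadj b a h
      exact ⟨v, u, huv.symm, hv, hu⟩
  refine ⟨c, fun a => ?_, hcomplete⟩
  by_cases ha : a.val = 0
  · obtain ⟨t, ht⟩ := List.head?_eq_some_iff.mp hw.head?_eq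
    exact ⟨0, Fin.ext (by simp [c, ht, ha])⟩
  · obtain ⟨u, -, -, hu, -⟩ := hcomplete a ⟨0, by omega⟩ (Fin.ne_of_val_ne ha)
    exact ⟨u, hu⟩

end IsCompleteCyclicWord

theorem bddAbove_setOf_mul_div_two_le (n : ℕ) : BddAbove {k : ℕ | k * (k / 2) ≤ n} := by
  refine ⟨n + 1, fun k (hk : k * (k / 2) ≤ n) => ?_⟩
  rcases lt_or_ge k 2 with hk2 | hk2
  · omega
  · have := Nat.le_mul_of_pos_right k (show 0 < k / 2 by omega)
    omega

/-- For every `n ≥ 4`, `ψ_s(C_n) = max {k : k⌊k/2⌋ ≤ n}`. -/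
theorem pseudoachromatic_cycleGraph (n : ℕ) (hn : 4 ≤ n) :
    (SimpleGraph.cycleGraph n).pseudoachromatic = sSup {k : ℕ | k * (k / 2) ≤ n} := by
  set S := {k : ℕ | k * (k / 2) ≤ n}
  have hS : BddAbove S := bddAbove_setOf_mul_div_two_le n
  have h2 : 2 ∈ S := show 2 * (2 / 2) ≤ n by omega
  obtain ⟨w, hw, hlen⟩ := exists_isCompleteCyclicWord (sSup S) (le_csSup hS h2)
  obtain ⟨c, hc⟩ := hw.exists_isCompleteColoring_cycleGraph (n := n) (by omega)
    (hlen.trans_le (Nat.sSup_mem ⟨2, h2⟩ hS))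
  refine IsGreatest.csSup_eq ⟨⟨c, hc⟩, ?_⟩
  rintro k ⟨c, hc⟩
  exact le_csSup hS
    (show k * (k / 2) ≤ n by simpa using hc.mul_div_two_le_card cycleGraph_degree_le_two)
end

section
/- For every n ≥ 4, the complete bipartite graph K_{2,n−2} satisfies ψ(K_{2,n−2}) = 2 and ψ_s(K_{2,n−2}) = 3. -/
open SimpleGraph

/-!
In a proper colouring of `K_{α,β}` no colour occurs on both sides, while completeness forces any
two distinct colours to occur on opposite sides; so the side on which a colour occurs determines
the colour, and there are at most two. For the pseudoachromatic number, the two vertices of the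
small side form a vertex cover, so at most one colour avoids them and there are at most three
colours; three are reached by colouring `a₀ ↦ 0`, `b₀ ↦ 2` and every other vertex `1`.
-/

namespace SimpleGraph

section General

variable {V : Type*} {G : SimpleGraph V} {k : ℕ}

theorem isCompleteColoring_of_lt (c : V → Fin k) (hsurj : Function.Surjective c)
    (hlt : ∀ i j : Fin k, i < j → ∃ u v, G.Adj u v ∧ c u = i ∧ c v = j) :
    G.IsCompleteColoring c := by
  refine ⟨hsurj, fun i j hij => ?_⟩
  rcases hij.lt_or_gt with h | h
  · exact hlt i j h
  · obtain ⟨u, v, huv, hu, hv⟩ := hlt j i h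
    exact ⟨v, u, huv.symm, hv, hu⟩

/-- Any two colours missing from the cover `s` would need an edge avoiding `s`. -/
theorem IsCompleteColoring.le_card_add_one_of_isVertexCover {c : V → Fin k}
    (hc : G.IsCompleteColoring c) {s : Finset V} (hs : G.IsVertexCover s) :
    k ≤ s.card + 1 := by
  classical
  have hfree : ((s.image c)ᶜ).card ≤ 1 := by
    refine Finset.card_le_one.mpr fun i hi j hj => by_contra fun hij => ?_
    obtain ⟨u, v, huv, rfl, rfl⟩ := hc.2 i j hij
    rw [Finset.mem_compl] at hi hj
    rcases hs huv with hu | hv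
    · exact hi (Finset.mem_image_of_mem c hu)
    · exact hj (Finset.mem_image_of_mem c hv)
  have himage : (s.image c).card ≤ s.card := Finset.card_image_le
  have hcompl := Finset.card_compl (s.image c)
  rw [Fintype.card_fin] at hcompl
  omega

end General

section CompleteBipartite

variable {α β : Type*} {k : ℕ}

theorem IsProperColoring.le_two_of_isCompleteColoring_completeBipartiteGraph
    {c : α ⊕ β → Fin k} (hp : (completeBipartiteGraph α β).IsProperColoring c)
    (hc : (completeBipartiteGraph α β).IsCompleteColoring c) : k ≤ 2 := by
  classical
  have hsides (a : α) (b : β) : c (.inl a) ≠ c (.inr b) := hp (by simp)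
  let onLeft : Fin k → Bool := fun i => decide (∃ a, c (.inl a) = i)
  have hinj : Function.Injective onLeft := by
    intro i j hij
    by_contra hne
    obtain ⟨u, v, huv, rfl, rfl⟩ := hc.2 i j hne
    rcases u with a | b <;> rcases v with a' | b'
    · simp at huv
    · obtain ⟨a', ha'⟩ : ∃ a', c (.inl a') = c (.inr b') := by simpa [onLeft] using hij
      exact hsides a' b' ha'
    · obtain ⟨a, ha⟩ : ∃ a, c (.inl a) = c (.inr b) := by simpa [onLeft] using hij.symm
      exact hsides a b ha
    · simp at huv
  simpa using Fintype.card_le_of_injective onLeft hinj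

theorem exists_isProperColoring_isCompleteColoring_two [Nonempty α] [Nonempty β] :
    ∃ c : α ⊕ β → Fin 2, (completeBipartiteGraph α β).IsProperColoring c ∧
      (completeBipartiteGraph α β).IsCompleteColoring c := by
  obtain ⟨a⟩ := ‹Nonempty α›
  obtain ⟨b⟩ := ‹Nonempty β›
  refine ⟨Sum.elim (fun _ => 0) (fun _ => 1), ?_, isCompleteColoring_of_lt _ ?_ ?_⟩
  · rintro (_ | _) (_ | _) huv <;> simp_all
  · intro i
    fin_cases i
    exacts [⟨.inl a, rfl⟩, ⟨.inr b, rfl⟩]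
  · intro i j hij
    fin_cases i <;> fin_cases j <;> simp at hij
    exact ⟨.inl a, .inr b, by simp, rfl, rfl⟩

theorem achromatic_completeBipartiteGraph [Nonempty α] [Nonempty β] :
    (completeBipartiteGraph α β).achromatic = 2 :=
  IsGreatest.csSup_eq ⟨exists_isProperColoring_isCompleteColoring_two,
    fun _ ⟨_, hp, hc⟩ => hp.le_two_of_isCompleteColoring_completeBipartiteGraph hc⟩

theorem isVertexCover_completeBipartiteGraph_range_inl :
    (completeBipartiteGraph α β).IsVertexCover (Set.range Sum.inl) := by
  rintro (_ | _) (_ | _) huv <;> simp_all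

theorem exists_isCompleteColoring_three [Nontrivial α] [Nontrivial β] :
    ∃ c : α ⊕ β → Fin 3, (completeBipartiteGraph α β).IsCompleteColoring c := by
  classical
  obtain ⟨a₀, a₁, ha⟩ := exists_pair_ne α
  obtain ⟨b₀, b₁, hb⟩ := exists_pair_ne β
  refine ⟨Sum.elim (fun a => if a = a₀ then 0 else 1) (fun b => if b = b₀ then 2 else 1),
    isCompleteColoring_of_lt _ ?_ ?_⟩
  · intro i
    fin_cases i
    exacts [⟨.inl a₀, by simp⟩, ⟨.inl a₁, by simp [ha.symm]⟩, ⟨.inr b₀, by simp⟩]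
  · intro i j hij
    fin_cases i <;> fin_cases j <;> simp at hij
    exacts [⟨.inl a₀, .inr b₁, by simp, by simp, by simp [hb.symm]⟩,
      ⟨.inl a₀, .inr b₀, by simp, by simp, by simp⟩,
      ⟨.inl a₁, .inr b₀, by simp, by simp [ha.symm], by simp⟩]

theorem pseudoachromatic_completeBipartiteGraph_fin_two [Nontrivial β] :
    (completeBipartiteGraph (Fin 2) β).pseudoachromatic = 3 := by
  refine IsGreatest.csSup_eq ⟨exists_isCompleteColoring_three, fun k ⟨_, hc⟩ => ?_⟩
  have hcover : (completeBipartiteGraph (Fin 2) β).IsVertexCover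
      ↑(Finset.univ.map (.inl : Fin 2 ↪ Fin 2 ⊕ β)) := by
    simpa using isVertexCover_completeBipartiteGraph_range_inl
  simpa using hc.le_card_add_one_of_isVertexCover hcover

end CompleteBipartite

end SimpleGraph

/-- For every `n ≥ 4`, `ψ(K_{2,n−2}) = 2` and `ψ_s(K_{2,n−2}) = 3`. -/
theorem achromatic_pseudoachromatic_completeBipartite (n : ℕ) (hn : 4 ≤ n) :
    (completeBipartiteGraph (Fin 2) (Fin (n - 2))).achromatic = 2 ∧
      (completeBipartiteGraph (Fin 2) (Fin (n - 2))).pseudoachromatic = 3 := by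
  have : Nontrivial (Fin (n - 2)) := Fin.nontrivial_iff_two_le.mpr (by omega)
  exact ⟨achromatic_completeBipartiteGraph, pseudoachromatic_completeBipartiteGraph_fin_two⟩
end
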